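/- arXiv:1506.05231 — 6 statements merged into one kernel-verified Lean document; each statement's English description precedes it below -/
import Mathlib

section
/- For P-almost every b ∈ {0,1}^∞ there exists a point θ(b) ∈ [0,1] such that lim_{n→∞} p_{b^n}(z) = 0 for every z ∈ [0, θ(b)) and lim_{n→∞} p_{b^n}(z) = 1 for every z ∈ (θ(b), 1]. Moreover, the thus constructed random variable θ is uniformly distributed on [0,1]: for every t ∈ [0,1], P({b : θ(b) ≤ t}) = t. -/
open Filter Set MeasureTheory

noncomputable section

/-- `g_0(z) = 2z - z²` (bit `false`), `g_1(z) = z²` (bit `true`). -/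
def gBit (c : Bool) (z : ℝ) : ℝ := if c then z ^ 2 else 2 * z - z ^ 2

/-- `pPre b n z = g_{b_n}(g_{b_{n-1}}(⋯ g_{b_1}(z) ⋯))`, where `b_i` is `b (i-1)`. -/
def pPre (b : ℕ → Bool) : ℕ → ℝ → ℝ
  | 0, z => z
  | n + 1, z => gBit (b n) (pPre b n z)

/-- `f(b) = Σ_{n ≥ 1} b_n 2^{-n}`. -/
def fBin (b : ℕ → Bool) : ℝ := ∑' n : ℕ, (if b n then (1 : ℝ) else 0) / 2 ^ (n + 1)

/-- The dyadic rationals in `[0,1]`. -/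
def dyadics : Set ℝ := Set.Icc 0 1 ∩ {x : ℝ | ∃ (p : ℤ) (n : ℕ), x = (p : ℝ) / 2 ^ n}

/-- The good channels of a BEC with erasure probability `ε`: `x ∈ [0,1]` such that some binary
expansion `b` of `x` satisfies `p_{b^n}(ε) → 0`. -/
def Gset (ε : ℝ) : Set ℝ :=
  {x : ℝ | ∃ b : ℕ → Bool, fBin b = x ∧ Tendsto (fun n => pPre b n ε) atTop (nhds 0)}

/-- The bad channels of a BEC with erasure probability `ε`: `x ∈ [0,1]` such that some binary
expansion `b` of `x` satisfies `p_{b^n}(ε) → 1`. -/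
def Bset (ε : ℝ) : Set ℝ :=
  {x : ℝ | ∃ b : ℕ → Bool, fBin b = x ∧ Tendsto (fun n => pPre b n ε) atTop (nhds 1)}

/-- Hamming weight `w(b^n)` of the length-`n` prefix of `b`. -/
def wPre (b : ℕ → Bool) (n : ℕ) : ℕ := ∑ i ∈ Finset.range n, (if b i then 1 else 0)

/-- `b` is `ρ`-heavy: `liminf_{n→∞} (w(b^n) - nρ) ≥ 0` (the liminf computed in `EReal`),
equivalently `liminf 2^{w(b^n)} / 2^{nρ} ≥ 1`. -/
def Heavy (ρ : ℝ) (b : ℕ → Bool) : Prop :=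
  0 ≤ atTop.liminf (fun n : ℕ => (((wPre b n : ℝ) - n * ρ : ℝ) : EReal))

/-- The set of `ρ`-heavy channels. -/
def Hset (ρ : ℝ) : Set ℝ := {x : ℝ | ∃ b : ℕ → Bool, fBin b = x ∧ Heavy ρ b}

/-!
The quantity `u(z) = z (1 - z)` satisfies `Σ_c √(u (g_c z)) ≤ √3 √(u z)`, so the expectation of
`√(u (p_{b^n}(z)))` is at most `(√3/2)^n`. Hence almost surely `Σ_n √(u (p_{b^n}(z)))` is finite;
since `|p_{b^{n+1}}(z) - p_{b^n}(z)| = u (p_{b^n}(z))`, the sequence `p_{b^n}(z)` is Cauchy and its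
limit is a root of `u`, i.e. `0` or `1`. Because `g_0 + g_1 = 2 id`, the expectation of
`p_{b^n}(z)` is `z`, and dominated convergence gives `P(p_{b^n}(z) → 1) = z`.
Each `p_{b^n}` is monotone, so `θ(b)` is taken to be the supremum of the points where
`p_{b^n} → 0`. The dichotomy on the countably many rationals gives `p_{b^n}(z) → 1` above `θ(b)`
almost surely, and `{θ ≤ t}` is squeezed between `{p_{b^n}(t) → 1}` and `{p_{b^n}(q) → 1}`, `q > t`.
-/

open scoped ENNReal Topology

@[simp] lemma gBit_false (z : ℝ) : gBit false z = 2 * z - z ^ 2 := rfl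

@[simp] lemma gBit_true (z : ℝ) : gBit true z = z ^ 2 := rfl

lemma gBit_mem_Icc (c : Bool) {z : ℝ} (hz : z ∈ Icc (0 : ℝ) 1) : gBit c z ∈ Icc (0 : ℝ) 1 := by
  obtain ⟨h0, h1⟩ := hz
  cases c <;> simp only [gBit_false, gBit_true, mem_Icc] <;> constructor <;> nlinarith

lemma monotoneOn_gBit (c : Bool) : MonotoneOn (gBit c) (Icc 0 1) := by
  intro z hz z' hz' h
  cases c <;> simp only [gBit_false, gBit_true] <;> nlinarith [hz.1, hz'.2]

lemma gBit_zero (c : Bool) : gBit c 0 = 0 := by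
  cases c <;> simp

lemma sum_gBit (x : ℝ) : ∑ c, gBit c x = 2 * x := by
  simp only [Fintype.sum_bool, gBit_false, gBit_true]; ring

lemma dist_gBit (c : Bool) {x : ℝ} (hx : x ∈ Icc (0 : ℝ) 1) :
    dist x (gBit c x) = x * (1 - x) := by
  obtain ⟨h0, h1⟩ := hx
  rw [Real.dist_eq]
  cases c
  · rw [gBit_false, abs_of_nonpos (by nlinarith)]; ring
  · rw [gBit_true, abs_of_nonneg (by nlinarith)]; ring

lemma sum_sqrt_gBit_le {x : ℝ} (hx : x ∈ Icc (0 : ℝ) 1) :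
    ∑ c, √(gBit c x * (1 - gBit c x)) ≤ √3 * √(x * (1 - x)) := by
  obtain ⟨h0, h1⟩ := hx
  set u := x * (1 - x)
  have hu : 0 ≤ u := by positivity
  have hu4 : u ≤ 1 / 4 := by nlinarith [sq_nonneg (2 * x - 1)]
  set A := √(gBit false x * (1 - gBit false x))
  set C := √(gBit true x * (1 - gBit true x))
  have hA : A ^ 2 = (2 - x) * (1 - x) * u := by
    have e : gBit false x * (1 - gBit false x) = (2 - x) * (1 - x) * u := by rw [gBit_false]; ring
    rw [Real.sq_sqrt (e ▸ mul_nonneg (mul_nonneg (by linarith) (by linarith)) hu), e]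
  have hC : C ^ 2 = x * (1 + x) * u := by
    have e : gBit true x * (1 - gBit true x) = x * (1 + x) * u := by rw [gBit_true]; ring
    rw [Real.sq_sqrt (e ▸ by positivity), e]
  -- `(A C)² = u³ (2 + u) ≤ (u (1 + 2u) / 2)²` because `4u ≤ 1`
  have hAC : A * C ≤ u * (1 + 2 * u) / 2 := by
    refine (pow_le_pow_iff_left₀ (by positivity) (by positivity) two_ne_zero).1 ?_
    rw [mul_pow, hA, hC]
    nlinarith [mul_nonneg (mul_nonneg hu hu) hu]
  rw [Fintype.sum_bool]
  refine (pow_le_pow_iff_left₀ (by positivity) (by positivity) two_ne_zero).1 ?_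
  rw [mul_pow, Real.sq_sqrt zero_le_three, Real.sq_sqrt hu]
  nlinarith

lemma pPre_mem_Icc (b : ℕ → Bool) (n : ℕ) {z : ℝ} (hz : z ∈ Icc (0 : ℝ) 1) :
    pPre b n z ∈ Icc (0 : ℝ) 1 := by
  induction n with
  | zero => exact hz
  | succ n ih => exact gBit_mem_Icc _ ih

lemma monotoneOn_pPre (b : ℕ → Bool) (n : ℕ) : MonotoneOn (pPre b n) (Icc 0 1) := by
  induction n with
  | zero => exact monotoneOn_id
  | succ n ih =>
    exact (monotoneOn_gBit (b n)).comp ih fun z hz => pPre_mem_Icc b n hz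

@[simp] lemma pPre_apply_zero (b : ℕ → Bool) (n : ℕ) : pPre b n 0 = 0 := by
  induction n with
  | zero => rfl
  | succ n ih => simp only [pPre, ih, gBit_zero]

lemma pPre_congr_prefix {b c : ℕ → Bool} {n : ℕ} (h : ∀ i < n, b i = c i) (z : ℝ) :
    pPre b n z = pPre c n z := by
  induction n with
  | zero => rfl
  | succ n ih =>
    simp only [pPre, h n n.lt_succ_self, ih fun i hi => h i (hi.trans n.lt_succ_self)]

def extFin (n : ℕ) (s : Fin n → Bool) : ℕ → Bool :=
  fun i => if h : i < n then s ⟨i, h⟩ else false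

lemma extFin_of_lt {n i : ℕ} (s : Fin n → Bool) (h : i < n) : extFin n s i = s ⟨i, h⟩ :=
  dif_pos h

def prefixWord (n : ℕ) (b : ℕ → Bool) : Fin n → Bool := fun i => b i

lemma measurable_prefixWord (n : ℕ) : Measurable (prefixWord n) :=
  measurable_pi_lambda _ fun _ => measurable_pi_apply _

lemma pPre_extFin_prefixWord (b : ℕ → Bool) (n : ℕ) (z : ℝ) :
    pPre (extFin n (prefixWord n b)) n z = pPre b n z :=
  pPre_congr_prefix (fun _ hi => extFin_of_lt _ hi) z

lemma pPre_extFin_snoc {n : ℕ} (s : Fin n → Bool) (c : Bool) (z : ℝ) :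
    pPre (extFin (n + 1) (Fin.snoc s c)) (n + 1) z = gBit c (pPre (extFin n s) n z) := by
  have hlast : extFin (n + 1) (Fin.snoc s c) n = c := by
    rw [extFin_of_lt _ n.lt_succ_self]; exact Fin.snoc_last (α := fun _ => Bool) (p := s) c
  rw [pPre, hlast, pPre_congr_prefix (c := extFin n s)]
  intro i hi
  rw [extFin_of_lt _ (hi.trans n.lt_succ_self), extFin_of_lt _ hi]
  exact Fin.snoc_castSucc (α := fun _ => Bool) (i := ⟨i, hi⟩) ..

lemma sum_pPre_extFin_succ {M : Type*} [AddCommMonoid M] (F : ℝ → M) (n : ℕ) (z : ℝ) :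
    ∑ s : Fin (n + 1) → Bool, F (pPre (extFin (n + 1) s) (n + 1) z) =
      ∑ s : Fin n → Bool, ∑ c, F (gBit c (pPre (extFin n s) n z)) := by
  rw [← (Fin.snocEquiv fun _ => Bool).sum_comp, Fintype.sum_prod_type_right]
  exact Finset.sum_congr rfl fun s _ => Finset.sum_congr rfl fun c _ =>
    congrArg F (pPre_extFin_snoc s c z)

lemma sum_pPre_extFin (n : ℕ) (z : ℝ) : ∑ s : Fin n → Bool, pPre (extFin n s) n z = 2 ^ n * z := by
  induction n with
  | zero => simp [pPre]
  | succ n ih =>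
    calc _ = ∑ s : Fin n → Bool, ∑ c, gBit c (pPre (extFin n s) n z) :=
          sum_pPre_extFin_succ (fun x => x) n z
      _ = 2 ^ (n + 1) * z := by simp only [sum_gBit, ← Finset.mul_sum, ih]; ring

lemma sum_sqrt_pPre_extFin_le (n : ℕ) {z : ℝ} (hz : z ∈ Icc (0 : ℝ) 1) :
    ∑ s : Fin n → Bool, √(pPre (extFin n s) n z * (1 - pPre (extFin n s) n z)) ≤
      √3 ^ n * √(z * (1 - z)) := by
  induction n with
  | zero => simp [pPre]
  | succ n ih =>
    rw [sum_pPre_extFin_succ fun x => √(x * (1 - x))]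
    calc _ ≤ ∑ s : Fin n → Bool, √3 * √(pPre (extFin n s) n z * (1 - pPre (extFin n s) n z)) :=
          Finset.sum_le_sum fun s _ => sum_sqrt_gBit_le (pPre_mem_Icc _ n hz)
      _ ≤ √3 ^ (n + 1) * √(z * (1 - z)) := by
          rw [← Finset.mul_sum, pow_succ', mul_assoc]
          exact mul_le_mul_of_nonneg_left ih (Real.sqrt_nonneg 3)

lemma tendsto_zero_or_one_of_summable {x : ℕ → ℝ}
    (hdist : ∀ n, dist (x n) (x (n + 1)) ≤ x n * (1 - x n))
    (hsum : Summable fun n => x n * (1 - x n)) :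
    Tendsto x atTop (𝓝 0) ∨ Tendsto x atTop (𝓝 1) := by
  obtain ⟨L, hL⟩ := cauchySeq_tendsto_of_complete (cauchySeq_of_dist_le_of_summable _ hdist hsum)
  have hL01 : L * (1 - L) = 0 :=
    tendsto_nhds_unique (hL.mul (tendsto_const_nhds.sub hL)) hsum.tendsto_atTop_zero
  rcases mul_eq_zero.1 hL01 with h | h
  · exact .inl (h ▸ hL)
  · exact .inr ((sub_eq_zero.1 h).symm ▸ hL)

lemma measurable_pPre (n : ℕ) (z : ℝ) : Measurable fun b => pPre b n z := by
  convert (measurable_of_finite fun s => pPre (extFin n s) n z).comp (measurable_prefixWord n)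
  exact (pPre_extFin_prefixWord _ n z).symm

def zeroBasin (b : ℕ → Bool) : Set ℝ :=
  {x ∈ Icc (0 : ℝ) 1 | Tendsto (fun n => pPre b n x) atTop (𝓝 0)}

def threshold (b : ℕ → Bool) : ℝ := sSup (zeroBasin b)

section Threshold

variable (b : ℕ → Bool)

lemma bddAbove_zeroBasin : BddAbove (zeroBasin b) :=
  ⟨1, fun _ hx => hx.1.2⟩

lemma zero_mem_zeroBasin : 0 ∈ zeroBasin b :=
  ⟨left_mem_Icc.2 zero_le_one, by simp⟩

lemma threshold_mem_Icc : threshold b ∈ Icc (0 : ℝ) 1 :=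
  ⟨le_csSup (bddAbove_zeroBasin b) (zero_mem_zeroBasin b),
    csSup_le ⟨0, zero_mem_zeroBasin b⟩ fun _ hx => hx.1.2⟩

variable {b}

lemma tendsto_zero_of_lt_threshold {z : ℝ} (hz0 : 0 ≤ z) (hz : z < threshold b) :
    Tendsto (fun n => pPre b n z) atTop (𝓝 0) := by
  obtain ⟨x, ⟨hxI, hx⟩, hzx⟩ := exists_lt_of_lt_csSup ⟨0, zero_mem_zeroBasin b⟩ hz
  have hzI : z ∈ Icc (0 : ℝ) 1 := ⟨hz0, hzx.le.trans hxI.2⟩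
  exact squeeze_zero (fun n => (pPre_mem_Icc b n hzI).1)
    (fun n => monotoneOn_pPre b n hzI hxI hzx.le) hx

lemma tendsto_one_of_threshold_lt
    (hb : ∀ q : ℚ, (q : ℝ) ∈ Icc (0 : ℝ) 1 → Tendsto (fun n => pPre b n q) atTop (𝓝 0) ∨
      Tendsto (fun n => pPre b n q) atTop (𝓝 1))
    {z : ℝ} (hz : threshold b < z) (hz1 : z ≤ 1) :
    Tendsto (fun n => pPre b n z) atTop (𝓝 1) := by
  obtain ⟨q, hθq, hqz⟩ := exists_rat_btwn hz
  have hqI : (q : ℝ) ∈ Icc (0 : ℝ) 1 := ⟨(threshold_mem_Icc b).1.trans hθq.le, hqz.le.trans hz1⟩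
  have hzI : z ∈ Icc (0 : ℝ) 1 := ⟨hqI.1.trans hqz.le, hz1⟩
  have hq : Tendsto (fun n => pPre b n q) atTop (𝓝 1) :=
    (hb q hqI).resolve_left fun h0 => hθq.not_ge (le_csSup (bddAbove_zeroBasin b) ⟨hqI, h0⟩)
  exact tendsto_of_tendsto_of_tendsto_of_le_of_le hq tendsto_const_nhds
    (fun n => monotoneOn_pPre b n hqI hzI hqz.le) fun n => (pPre_mem_Icc b n hzI).2

end Threshold

section FairCoin

variable {P : Measure (ℕ → Bool)}
  (hP : ∀ (c : ℕ → Bool) (n : ℕ), P {b : ℕ → Bool | ∀ i < n, b i = c i} = (2 : ℝ≥0∞)⁻¹ ^ n)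
include hP

lemma isProbabilityMeasure_of_measure_cylinder : IsProbabilityMeasure P :=
  ⟨by simpa using hP (fun _ => false) 0⟩

lemma map_prefixWord_singleton (n : ℕ) (s : Fin n → Bool) :
    P.map (prefixWord n) {s} = 2⁻¹ ^ n := by
  rw [Measure.map_apply (measurable_prefixWord n) (measurableSet_singleton s)]
  convert hP (extFin n s) n using 2
  ext b
  simp only [mem_preimage, mem_singleton_iff, funext_iff, Fin.forall_iff, prefixWord, mem_ofPred_eq]
  exact forall₂_congr fun i hi => by rw [extFin_of_lt]

lemma lintegral_comp_pPre (F : ℝ → ℝ≥0∞) (n : ℕ) (z : ℝ) :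
    ∫⁻ b, F (pPre b n z) ∂P = 2⁻¹ ^ n * ∑ s : Fin n → Bool, F (pPre (extFin n s) n z) := by
  calc ∫⁻ b, F (pPre b n z) ∂P
      = ∫⁻ b, F (pPre (extFin n (prefixWord n b)) n z) ∂P := by
        simp only [pPre_extFin_prefixWord]
    _ = ∫⁻ s, F (pPre (extFin n s) n z) ∂P.map (prefixWord n) :=
        (lintegral_map (measurable_of_finite fun s => F (pPre (extFin n s) n z))
          (measurable_prefixWord n)).symm
    _ = _ := by
        rw [lintegral_fintype, Finset.mul_sum]
        simp only [map_prefixWord_singleton hP, mul_comm]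

lemma lintegral_ofReal_pPre (n : ℕ) {z : ℝ} (hz : z ∈ Icc (0 : ℝ) 1) :
    ∫⁻ b, ENNReal.ofReal (pPre b n z) ∂P = ENNReal.ofReal z := by
  rw [lintegral_comp_pPre hP, ← ENNReal.ofReal_sum_of_nonneg fun s _ => (pPre_mem_Icc _ n hz).1,
    sum_pPre_extFin, ENNReal.ofReal_mul (by positivity), ENNReal.ofReal_pow zero_le_two,
    ENNReal.ofReal_ofNat, ← mul_assoc, ← mul_pow,
    ENNReal.inv_mul_cancel two_ne_zero ENNReal.ofNat_ne_top, one_pow, one_mul]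

lemma lintegral_sqrt_pPre_le (n : ℕ) {z : ℝ} (hz : z ∈ Icc (0 : ℝ) 1) :
    ∫⁻ b, ENNReal.ofReal √(pPre b n z * (1 - pPre b n z)) ∂P ≤ (ENNReal.ofReal √3 / 2) ^ n := by
  rw [lintegral_comp_pPre hP fun x => ENNReal.ofReal √(x * (1 - x)),
    ← ENNReal.ofReal_sum_of_nonneg fun s _ => Real.sqrt_nonneg _]
  calc 2⁻¹ ^ n * ENNReal.ofReal (∑ s : Fin n → Bool,
        √(pPre (extFin n s) n z * (1 - pPre (extFin n s) n z)))
      ≤ 2⁻¹ ^ n * ENNReal.ofReal (√3 ^ n) := by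
        gcongr
        refine (sum_sqrt_pPre_extFin_le n hz).trans (mul_le_of_le_one_right (by positivity) ?_)
        exact Real.sqrt_le_one.2 (by nlinarith [hz.1, hz.2])
    _ = (ENNReal.ofReal √3 / 2) ^ n := by
        rw [ENNReal.ofReal_pow (Real.sqrt_nonneg 3), div_eq_mul_inv, mul_pow, mul_comm]

lemma ae_summable_sqrt_pPre {z : ℝ} (hz : z ∈ Icc (0 : ℝ) 1) :
    ∀ᵐ b ∂P, Summable fun n => √(pPre b n z * (1 - pPre b n z)) := by
  have hmeas : ∀ n, Measurable fun b => ENNReal.ofReal √(pPre b n z * (1 - pPre b n z)) :=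
    fun n => by have := measurable_pPre n z; fun_prop
  have hratio : ENNReal.ofReal √3 / 2 < 1 := by
    rw [ENNReal.div_lt_iff (Or.inl two_ne_zero) (Or.inl ENNReal.ofNat_ne_top), one_mul,
      ← ENNReal.ofReal_ofNat, ENNReal.ofReal_lt_ofReal_iff zero_lt_two, Real.sqrt_lt' zero_lt_two]
    norm_num
  have hfin : ∫⁻ b, ∑' n, ENNReal.ofReal √(pPre b n z * (1 - pPre b n z)) ∂P ≠ ⊤ := by
    rw [lintegral_tsum fun n => (hmeas n).aemeasurable]
    refine ne_top_of_le_ne_top ?_ (ENNReal.tsum_le_tsum fun n => lintegral_sqrt_pPre_le hP n hz)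
    rw [ENNReal.tsum_geometric]
    exact ENNReal.inv_ne_top.2 (tsub_pos_iff_lt.2 hratio).ne'
  filter_upwards [ae_lt_top (Measurable.tsum hmeas) hfin] with b hb
  simpa [Real.sqrt_nonneg] using ENNReal.summable_toReal hb.ne

lemma ae_tendsto_zero_or_one {z : ℝ} (hz : z ∈ Icc (0 : ℝ) 1) :
    ∀ᵐ b ∂P, Tendsto (fun n => pPre b n z) atTop (𝓝 0) ∨
      Tendsto (fun n => pPre b n z) atTop (𝓝 1) := by
  filter_upwards [ae_summable_sqrt_pPre hP hz] with b hb
  have hu : ∀ n, 0 ≤ pPre b n z * (1 - pPre b n z) ∧ pPre b n z * (1 - pPre b n z) ≤ 1 :=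
    fun n => by obtain ⟨h0, h1⟩ := pPre_mem_Icc b n hz; constructor <;> nlinarith
  exact tendsto_zero_or_one_of_summable (fun n => (dist_gBit (b n) (pPre_mem_Icc b n hz)).le)
    (hb.of_nonneg_of_le (fun n => (hu n).1) fun n => Real.le_sqrt_self_iff.2 (hu n).2)

lemma measure_tendsto_one {z : ℝ} (hz : z ∈ Icc (0 : ℝ) 1) :
    P {b | Tendsto (fun n => pPre b n z) atTop (𝓝 1)} = ENNReal.ofReal z := by
  have := isProbabilityMeasure_of_measure_cylinder hP
  set A := {b | Tendsto (fun n => pPre b n z) atTop (𝓝 1)}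
  have hA : MeasurableSet A := measurableSet_tendsto _ fun n => measurable_pPre n z
  have hlim : Tendsto (fun n => ∫⁻ b, ENNReal.ofReal (pPre b n z) ∂P) atTop
      (𝓝 (∫⁻ b, A.indicator 1 b ∂P)) := by
    refine tendsto_lintegral_of_dominated_convergence 1
      (fun n => (measurable_pPre n z).ennreal_ofReal)
      (fun n => ae_of_all _ fun b => ENNReal.ofReal_le_one.2 (pPre_mem_Icc b n hz).2)
      (by simp) ?_
    filter_upwards [ae_tendsto_zero_or_one hP hz] with b hb
    by_cases hbA : b ∈ A
    · simpa [hbA] using ENNReal.tendsto_ofReal hbA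
    · simpa [hbA] using ENNReal.tendsto_ofReal (hb.resolve_right hbA)
  simp only [lintegral_ofReal_pPre hP _ hz, lintegral_indicator_one hA] at hlim
  exact (tendsto_nhds_unique tendsto_const_nhds hlim).symm

lemma ae_tendsto_one_of_threshold_lt :
    ∀ᵐ b ∂P, ∀ z ∈ Ioc (threshold b) 1, Tendsto (fun n => pPre b n z) atTop (𝓝 1) := by
  have hrat : ∀ᵐ b ∂P, ∀ q : ℚ, (q : ℝ) ∈ Icc (0 : ℝ) 1 →
      Tendsto (fun n => pPre b n q) atTop (𝓝 0) ∨ Tendsto (fun n => pPre b n q) atTop (𝓝 1) := by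
    refine ae_all_iff.2 fun q => ?_
    by_cases hq : (q : ℝ) ∈ Icc (0 : ℝ) 1
    · filter_upwards [ae_tendsto_zero_or_one hP hq] with b hb _ using hb
    · exact ae_of_all _ fun b h => absurd h hq
  filter_upwards [hrat] with b hb z hz using tendsto_one_of_threshold_lt hb hz.1 hz.2

lemma measure_threshold_le {t : ℝ} (ht : t ∈ Icc (0 : ℝ) 1) :
    P {b | threshold b ≤ t} = ENNReal.ofReal t := by
  have := isProbabilityMeasure_of_measure_cylinder hP
  refine le_antisymm ?_ ?_
  · have hq : ∀ q > t, P {b | threshold b ≤ t} ≤ ENNReal.ofReal q := by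
      intro q htq
      rcases le_or_gt q 1 with hq1 | hq1
      · rw [← measure_tendsto_one hP ⟨ht.1.trans htq.le, hq1⟩]
        refine measure_mono_ae ?_
        filter_upwards [ae_tendsto_one_of_threshold_lt hP] with b hb hbt
        exact hb q ⟨lt_of_le_of_lt hbt htq, hq1⟩
      · exact prob_le_one.trans (ENNReal.one_le_ofReal.2 hq1.le)
    exact ge_of_tendsto (ENNReal.continuous_ofReal.continuousWithinAt (s := Ioi t))
      (eventually_nhdsWithin_of_forall hq)
  · rw [← measure_tendsto_one hP ht]
    refine measure_mono fun b hb => ?_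
    by_contra hbt
    exact one_ne_zero (tendsto_nhds_unique hb (tendsto_zero_of_lt_threshold ht.1 (not_le.1 hbt)))

end FairCoin

theorem polar_threshold_general (P : Measure (ℕ → Bool))
    (hP : ∀ (c : ℕ → Bool) (n : ℕ),
      P {b : ℕ → Bool | ∀ i < n, b i = c i} = (2 : ENNReal)⁻¹ ^ n) :
    ∃ θ : (ℕ → Bool) → ℝ, (∀ b, θ b ∈ Set.Icc (0 : ℝ) 1) ∧
      (∀ᵐ b ∂P,
        (∀ z ∈ Set.Ico (0 : ℝ) (θ b), Tendsto (fun n => pPre b n z) atTop (nhds 0)) ∧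
        (∀ z ∈ Set.Ioc (θ b) (1 : ℝ), Tendsto (fun n => pPre b n z) atTop (nhds 1))) ∧
      (∀ t ∈ Set.Icc (0 : ℝ) 1, P {b : ℕ → Bool | θ b ≤ t} = ENNReal.ofReal t) := by
  refine ⟨threshold, threshold_mem_Icc, ?_, fun t ht => measure_threshold_le hP ht⟩
  filter_upwards [ae_tendsto_one_of_threshold_lt hP] with b hb
  exact ⟨fun z hz => tendsto_zero_of_lt_threshold hz.1 hz.2, hb⟩

/-- For `P`-almost every `b` there is a threshold `θ(b) ∈ [0,1]` with `p_{b^n}(z) → 0` for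
`z ∈ [0, θ(b))` and `p_{b^n}(z) → 1` for `z ∈ (θ(b), 1]`; moreover `θ` is uniformly
distributed on `[0,1]`. -/
theorem polar_threshold (P : Measure (ℕ → Bool)) [IsProbabilityMeasure P]
    (hP : ∀ (c : ℕ → Bool) (n : ℕ),
      P {b : ℕ → Bool | ∀ i < n, b i = c i} = (2 : ENNReal)⁻¹ ^ n) :
    ∃ θ : (ℕ → Bool) → ℝ, (∀ b, θ b ∈ Set.Icc (0 : ℝ) 1) ∧
      (∀ᵐ b ∂P,
        (∀ z ∈ Set.Ico (0 : ℝ) (θ b), Tendsto (fun n => pPre b n z) atTop (nhds 0)) ∧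
        (∀ z ∈ Set.Ioc (θ b) (1 : ℝ), Tendsto (fun n => pPre b n z) atTop (nhds 1))) ∧
      (∀ t ∈ Set.Icc (0 : ℝ) 1, P {b : ℕ → Bool | θ b ≤ t} = ENNReal.ofReal t) :=
  polar_threshold_general P hP
end
end

section
/- Let b ∈ {0,1}^∞ and suppose θ ∈ [0,1] is a threshold for b, i.e., lim_{n→∞} p_{b^n}(z) = 0 for every z ∈ [0,θ) and lim_{n→∞} p_{b^n}(z) = 1 for every z ∈ (θ,1]. Then 1 − θ is a threshold for the bitwise complement \bar b (\bar b_i = 1 − b_i): lim_{n→∞} p_{\bar b^n}(z) = 0 for every z ∈ [0, 1−θ) and lim_{n→∞} p_{\bar b^n}(z) = 1 for every z ∈ (1−θ, 1]. (Consequently, for non-dyadic x ∈ [0,1] whose unique binary expansion admits a threshold ϑ(x), one has ϑ(1−x) = 1 − ϑ(x).) -/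
open Filter Set MeasureTheory

noncomputable section

lemma pPre_compl (b : ℕ → Bool) (z : ℝ) (n : ℕ) :
    pPre (fun i => !(b i)) n z = 1 - pPre b n (1 - z) := by
  induction n with
  | zero => simp [pPre]
  | succ n ih =>
    simp only [pPre, ih, gBit]
    cases b n <;> simp <;> ring

/-- If `θ` is a threshold for `b` then `1 - θ` is a threshold for the bitwise complement of `b`. -/
theorem threshold_complement (b : ℕ → Bool) (θ : ℝ) (hθ : θ ∈ Set.Icc (0 : ℝ) 1)
    (h0 : ∀ z ∈ Set.Ico (0 : ℝ) θ, Tendsto (fun n => pPre b n z) atTop (nhds 0))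
    (h1 : ∀ z ∈ Set.Ioc θ (1 : ℝ), Tendsto (fun n => pPre b n z) atTop (nhds 1)) :
    (∀ z ∈ Set.Ico (0 : ℝ) (1 - θ),
      Tendsto (fun n => pPre (fun i => !(b i)) n z) atTop (nhds 0)) ∧
    (∀ z ∈ Set.Ioc (1 - θ) (1 : ℝ),
      Tendsto (fun n => pPre (fun i => !(b i)) n z) atTop (nhds 1)) := by
  constructor
  · intro z hz
    have h := h1 (1 - z) ⟨by linarith [hz.2], by linarith [hz.1]⟩
    have : Tendsto (fun n => 1 - pPre b n (1 - z)) atTop (nhds (1 - 1)) :=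
      tendsto_const_nhds.sub h
    simpa [pPre_compl] using this
  · intro z hz
    have h := h0 (1 - z) ⟨by linarith [hz.2], by linarith [hz.1]⟩
    have : Tendsto (fun n => 1 - pPre b n (1 - z)) atTop (nhds (1 - 0)) :=
      tendsto_const_nhds.sub h
    simpa [pPre_compl] using this
end
end

section
/- For every ε ∈ (0,1), the sets G_ε \ D and B_ε \ D are each dense in [0,1]: between any two dyadic rationals there is a non-dyadic good channel and a non-dyadic bad channel of the binary erasure channel with erasure probability ε. -/
open Filter Set MeasureTheory

noncomputable section

/-!
Binary expansions `f` map `{0,1}^ℕ` onto `[0,1]`, sequences sharing their first `N` bits have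
values within `2⁻ᴺ`, and `f b` is not dyadic unless `b` is eventually constant. So it suffices to
extend every finite prefix `d^N` to a good (resp. bad) sequence that is not eventually constant.
After the prefix the state is `z = p_{d^N}(ε) ∈ (0,1)`. Enough `1`s square it below `1/4`, and on
`[0,1/4]` the alternating tail `1,0,1,0,…` acts by `t ↦ 2t² - t⁴ ≤ t/2`, driving it to `0`. Bad
channels follow by complementing bits: `p_{b̄^n}(1 - z) = 1 - p_{b^n}(z)`.
-/

open Topology

namespace Real

theorem exists_natCast_eq_pow_mul_sum_ofDigitsTerm {b : ℕ} (a : ℕ → Fin b) (n : ℕ) :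
    ∃ k : ℕ, (b : ℝ) ^ n * ∑ i ∈ Finset.range n, ofDigitsTerm a i = k := by
  have hb : (b : ℝ) ≠ 0 := by exact_mod_cast (Fin.pos (a 0)).ne'
  induction n with
  | zero => exact ⟨0, by simp⟩
  | succ n ih =>
    obtain ⟨k, hk⟩ := ih
    refine ⟨b * k + a n, ?_⟩
    rw [Finset.sum_range_succ, mul_add, pow_succ', mul_assoc, hk, ofDigitsTerm, ← pow_succ',
      mul_left_comm, mul_inv_cancel₀ (pow_ne_zero _ hb)]
    push_cast
    ring

theorem ofDigits_pos {b : ℕ} {a : ℕ → Fin b} {i : ℕ} (hi : (a i : ℕ) ≠ 0) : 0 < ofDigits a :=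
  Summable.tsum_pos summable_ofDigitsTerm (fun _ ↦ ofDigitsTerm_nonneg) i <| by
    have : 0 < b := Fin.pos (a 0)
    simp only [ofDigitsTerm]
    positivity

theorem ofDigits_lt_one {b : ℕ} {a : ℕ → Fin b} {i : ℕ} (hi : (a i : ℕ) + 1 < b) :
    ofDigits a < 1 := by
  have hb : 1 < b := by omega
  rw [← ofDigits_const_last_eq_one' hb]
  refine Summable.tsum_lt_tsum_of_nonneg (i := i) (fun _ ↦ ofDigitsTerm_nonneg) (fun j ↦ ?_) ?_
    summable_ofDigitsTerm
  · simp only [ofDigitsTerm]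
    gcongr
    exact_mod_cast Nat.le_sub_one_of_lt (a j).isLt
  · simp only [ofDigitsTerm]
    gcongr
    exact_mod_cast (Nat.lt_sub_iff_add_lt.2 hi)

theorem ofDigits_mem_Ioo {b : ℕ} {a : ℕ → Fin b} {i j : ℕ} (h : a i ≠ a j) :
    ofDigits a ∈ Ioo 0 1 := by
  have h' : (a i : ℕ) ≠ a j := Fin.val_injective.ne h
  have hi := (a i).isLt
  have hj := (a j).isLt
  constructor
  · rcases Nat.eq_zero_or_pos (a i) with h0 | h0
    · exact ofDigits_pos (i := j) (by omega)
    · exact ofDigits_pos (i := i) (by omega)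
  · rcases lt_or_ge ((a i : ℕ) + 1) b with h1 | h1
    · exact ofDigits_lt_one (i := i) h1
    · exact ofDigits_lt_one (i := j) (by omega)

theorem ofDigits_ne_intCast_div_pow {b : ℕ} {a : ℕ → Fin b} (ha : ¬ EventuallyConst a atTop)
    (p : ℤ) (m : ℕ) : ofDigits a ≠ p / b ^ m := by
  have hb : (b : ℝ) ^ m ≠ 0 := pow_ne_zero m (by exact_mod_cast (Fin.pos (a 0)).ne')
  obtain ⟨j, hjm, hj⟩ : ∃ j ≥ m, a j ≠ a m := by
    simpa using not_exists.1 (mt eventuallyConst_atTop.2 ha) m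
  set t := ofDigits (fun i ↦ a (i + m))
  have ht : t ∈ Ioo 0 1 :=
    ofDigits_mem_Ioo (i := j - m) (j := 0) (by simpa [Nat.sub_add_cancel hjm])
  obtain ⟨k, hk⟩ := exists_natCast_eq_pow_mul_sum_ofDigitsTerm a m
  intro h
  -- `b ^ m * ofDigits a` would be an integer, but it is `k + t` with `0 < t < 1`
  have hp : (p : ℝ) = k + t := by
    rw [← hk, ← mul_inv_cancel_left₀ hb t, ← mul_add, ← ofDigits_eq_sum_add_ofDigits, h,
      mul_div_cancel₀ _ hb]
  have h0 : (k : ℤ) < p := by exact_mod_cast (by linarith [ht.1] : (k : ℝ) < p)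
  have h1 : p < k + 1 := by exact_mod_cast (by linarith [ht.2] : (p : ℝ) < k + 1)
  omega

end Real

theorem fBin_eq_ofDigits (b : ℕ → Bool) : fBin b = Real.ofDigits (finTwoEquiv.symm ∘ b) := by
  refine tsum_congr fun i ↦ ?_
  cases h : b i <;> simp [Real.ofDigitsTerm, finTwoEquiv, div_eq_mul_inv, h]

theorem surjOn_fBin : SurjOn fBin univ (Icc 0 1) := by
  intro x hx
  obtain ⟨a, -, rfl⟩ := Real.ofDigits_SurjOn one_lt_two hx
  exact ⟨finTwoEquiv ∘ a, trivial, by simp [fBin_eq_ofDigits, Function.comp_def]⟩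

theorem abs_fBin_sub_fBin_le {b b' : ℕ → Bool} {n : ℕ} (h : ∀ i < n, b i = b' i) :
    |fBin b - fBin b'| ≤ (2 ^ n)⁻¹ := by
  simpa [fBin_eq_ofDigits] using
    Real.abs_ofDigits_sub_ofDigits_le (x := finTwoEquiv.symm ∘ b) fun i hi ↦ by simp [h i hi]

theorem fBin_notMem_dyadics {b : ℕ → Bool} (hb : ¬ EventuallyConst b atTop) :
    fBin b ∉ dyadics := by
  rintro ⟨-, p, m, hpm⟩
  have ha : ¬ EventuallyConst (finTwoEquiv.symm ∘ b) atTop := fun h ↦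
    hb (by simpa [← Function.comp_assoc] using h.comp finTwoEquiv)
  exact Real.ofDigits_ne_intCast_div_pow ha p m (by simpa [fBin_eq_ofDigits] using hpm)

theorem Icc_subset_closure_diff_dyadics {P : (ℕ → Bool) → Prop}
    (hP : ∀ (d : ℕ → Bool) (N : ℕ), ∃ b, (∀ i < N, b i = d i) ∧ P b ∧ ¬ EventuallyConst b atTop) :
    Icc 0 1 ⊆ closure ({x | ∃ b, fBin b = x ∧ P b} \ dyadics) := by
  intro x hx
  rw [Metric.mem_closure_iff]
  intro δ hδ
  obtain ⟨d, -, rfl⟩ := surjOn_fBin hx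
  obtain ⟨N, hN⟩ := exists_pow_lt_of_lt_one hδ (by norm_num : (2⁻¹ : ℝ) < 1)
  obtain ⟨b, hbd, hPb, hb⟩ := hP d N
  refine ⟨fBin b, ⟨⟨b, rfl, hPb⟩, fBin_notMem_dyadics hb⟩, ?_⟩
  calc dist (fBin d) (fBin b) ≤ (2 ^ N)⁻¹ := abs_fBin_sub_fBin_le fun i hi ↦ (hbd i hi).symm
    _ < δ := by rwa [← inv_pow]

section Splice

variable {α : Type*}

def splice (d e : ℕ → α) (N : ℕ) : ℕ → α := fun i ↦ if i < N then d i else e (i - N)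

theorem splice_of_lt {d e : ℕ → α} {N i : ℕ} (h : i < N) : splice d e N i = d i := if_pos h

theorem splice_add (d e : ℕ → α) (N i : ℕ) : splice d e N (N + i) = e i := by
  simp [splice]

theorem eventuallyConst_splice_iff {d e : ℕ → α} {N : ℕ} :
    EventuallyConst (splice d e N) atTop ↔ EventuallyConst e atTop := by
  have h : map (splice d e N) atTop = map e atTop := by
    conv_lhs => rw [← map_add_atTop_eq_nat N, map_map]
    congr 1
    funext i
    simp [add_comm i, splice_add]
  simp only [EventuallyConst, h]

end Splice

theorem mapsTo_gBit (c : Bool) : MapsTo (gBit c) (Icc 0 1) (Icc 0 1) := by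
  rintro z ⟨h0, h1⟩
  cases c <;> simp only [gBit, Bool.false_eq_true, if_true, if_false, mem_Icc] <;>
    constructor <;> nlinarith

theorem mapsTo_gBit_Ioo (c : Bool) : MapsTo (gBit c) (Ioo 0 1) (Ioo 0 1) := by
  rintro z ⟨h0, h1⟩
  cases c <;> simp only [gBit, Bool.false_eq_true, if_true, if_false, mem_Ioo] <;>
    constructor <;> nlinarith

theorem mapsTo_pPre (b : ℕ → Bool) (n : ℕ) : MapsTo (pPre b n) (Icc 0 1) (Icc 0 1) := by
  induction n with
  | zero => exact mapsTo_id _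
  | succ n ih => exact (mapsTo_gBit (b n)).comp ih

theorem mapsTo_pPre_Ioo (b : ℕ → Bool) (n : ℕ) : MapsTo (pPre b n) (Ioo 0 1) (Ioo 0 1) := by
  induction n with
  | zero => exact mapsTo_id _
  | succ n ih => exact (mapsTo_gBit_Ioo (b n)).comp ih

theorem pPre_congr {b b' : ℕ → Bool} {n : ℕ} (h : ∀ i < n, b i = b' i) (z : ℝ) :
    pPre b n z = pPre b' n z := by
  induction n with
  | zero => rfl
  | succ n ih => simp only [pPre, ih fun i hi ↦ h i (by omega), h n n.lt_succ_self]

theorem pPre_add (b : ℕ → Bool) (m n : ℕ) (z : ℝ) :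
    pPre b (m + n) z = pPre (fun i ↦ b (m + i)) n (pPre b m z) := by
  induction n with
  | zero => rfl
  | succ n ih => exact congrArg (gBit (b (m + n))) ih

theorem pPre_const_true (n : ℕ) (z : ℝ) : pPre (fun _ ↦ true) n z = z ^ 2 ^ n := by
  induction n with
  | zero => simp [pPre]
  | succ n ih => simp [pPre, gBit, ih, pow_succ, pow_mul]

theorem pPre_not (b : ℕ → Bool) (n : ℕ) (z : ℝ) :
    pPre (fun i ↦ !b i) n (1 - z) = 1 - pPre b n z := by
  induction n with
  | zero => rfl
  | succ n ih =>
    simp only [pPre, ih]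
    cases b n <;>
      simp only [gBit, Bool.not_false, Bool.not_true, Bool.false_eq_true, ↓reduceIte] <;> ring

theorem tendsto_pPre_splice_iff {d e : ℕ → Bool} {N : ℕ} {z : ℝ} {l : Filter ℝ} :
    Tendsto (fun n ↦ pPre (splice d e N) n z) atTop l ↔
      Tendsto (fun n ↦ pPre e n (pPre d N z)) atTop l := by
  rw [← tendsto_add_atTop_iff_nat N]
  refine tendsto_congr fun n ↦ ?_
  rw [add_comm, pPre_add, pPre_congr (fun i hi ↦ splice_of_lt hi)]
  simp only [splice_add]

theorem gBit_false_gBit_true_le_half {t : ℝ} (h0 : 0 ≤ t) (h1 : t ≤ 1 / 4) :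
    gBit false (gBit true t) ≤ t / 2 := by
  simp only [gBit, Bool.false_eq_true, if_true, if_false]
  nlinarith [pow_nonneg h0 4, mul_nonneg h0 (sub_nonneg.2 h1)]

def altBits (i : ℕ) : Bool := decide (Even i)

theorem pPre_altBits_two_mul_add_one (k : ℕ) (z : ℝ) :
    pPre altBits (2 * k + 1) z = pPre altBits (2 * k) z ^ 2 := by
  simp [pPre, gBit, altBits]

theorem pPre_altBits_two_mul_add_two (k : ℕ) (z : ℝ) :
    pPre altBits (2 * k + 2) z = gBit false (gBit true (pPre altBits (2 * k) z)) := by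
  simp [pPre, altBits]

theorem pPre_altBits_two_mul_le {z : ℝ} (hz : z ∈ Icc 0 (1 / 4)) (k : ℕ) :
    pPre altBits (2 * k) z ≤ z * (1 / 2) ^ k := by
  induction k with
  | zero => simp [pPre]
  | succ k ih =>
    have h0 := (mapsTo_pPre altBits (2 * k) ⟨hz.1, hz.2.trans (by norm_num)⟩).1
    have h1 : z * (1 / 2) ^ k ≤ 1 / 4 :=
      (mul_le_of_le_one_right hz.1 (pow_le_one₀ (by norm_num) (by norm_num))).trans hz.2
    rw [mul_add_one, pPre_altBits_two_mul_add_two, pow_succ]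
    linarith [gBit_false_gBit_true_le_half h0 (ih.trans h1)]

theorem tendsto_pPre_altBits {z : ℝ} (hz : z ∈ Icc 0 (1 / 4)) :
    Tendsto (fun n ↦ pPre altBits n z) atTop (𝓝 0) := by
  have hIcc (n : ℕ) : pPre altBits n z ∈ Icc 0 1 :=
    mapsTo_pPre altBits n ⟨hz.1, hz.2.trans (by norm_num)⟩
  have hle (n : ℕ) : pPre altBits n z ≤ z * (1 / 2) ^ (n / 2) := by
    obtain ⟨k, rfl | rfl⟩ := Nat.even_or_odd' n
    · simpa using pPre_altBits_two_mul_le hz k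
    · rw [pPre_altBits_two_mul_add_one, show (2 * k + 1) / 2 = k by omega]
      exact (pow_le_of_le_one (hIcc _).1 (hIcc _).2 two_ne_zero).trans
        (pPre_altBits_two_mul_le hz k)
  have hlim : Tendsto (fun n : ℕ ↦ z * (1 / 2 : ℝ) ^ (n / 2)) atTop (𝓝 0) := by
    simpa using ((tendsto_pow_atTop_nhds_zero_of_lt_one (r := (1 / 2 : ℝ)) (by norm_num)
      (by norm_num)).comp (Nat.tendsto_div_const_atTop two_ne_zero)).const_mul z
  exact squeeze_zero (fun n ↦ (hIcc n).1) hle hlim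

theorem not_eventuallyConst_altBits : ¬ EventuallyConst altBits atTop := by
  rw [eventuallyConst_atTop]
  rintro ⟨i, hi⟩
  have h := hi (i + 1) i.le_succ
  simp only [altBits, Nat.even_add_one, decide_eq_decide] at h
  exact iff_not_self h.symm

theorem exists_tendsto_pPre_zero {z : ℝ} (hz : z ∈ Ico 0 1) :
    ∃ e : ℕ → Bool, Tendsto (fun n ↦ pPre e n z) atTop (𝓝 0) ∧ ¬ EventuallyConst e atTop := by
  obtain ⟨M, hM⟩ := exists_pow_lt_of_lt_one (by norm_num : (0 : ℝ) < 1 / 4) hz.2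
  have hzM : z ^ 2 ^ M ∈ Icc 0 (1 / 4) :=
    ⟨pow_nonneg hz.1 _, (pow_le_pow_of_le_one hz.1 hz.2.le M.lt_two_pow_self.le).trans hM.le⟩
  refine ⟨splice (fun _ ↦ true) altBits M, ?_, ?_⟩
  · rw [tendsto_pPre_splice_iff, pPre_const_true]
    exact tendsto_pPre_altBits hzM
  · rw [eventuallyConst_splice_iff]
    exact not_eventuallyConst_altBits

theorem exists_tendsto_pPre_one {z : ℝ} (hz : z ∈ Ioc 0 1) :
    ∃ e : ℕ → Bool, Tendsto (fun n ↦ pPre e n z) atTop (𝓝 1) ∧ ¬ EventuallyConst e atTop := by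
  obtain ⟨e, he, hne⟩ :=
    exists_tendsto_pPre_zero (z := 1 - z) ⟨by linarith [hz.2], by linarith [hz.1]⟩
  refine ⟨fun i ↦ !e i, ?_, fun h ↦ hne ?_⟩
  · simpa [← pPre_not, sub_sub_cancel] using (tendsto_const_nhds (x := (1 : ℝ))).sub he
  · simpa [Function.comp_def] using h.comp not

theorem exists_agree_tendsto_pPre {z l : ℝ} (d : ℕ → Bool) (N : ℕ)
    (he : ∃ e : ℕ → Bool, Tendsto (fun n ↦ pPre e n (pPre d N z)) atTop (𝓝 l) ∧
      ¬ EventuallyConst e atTop) :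
    ∃ b : ℕ → Bool, (∀ i < N, b i = d i) ∧ Tendsto (fun n ↦ pPre b n z) atTop (𝓝 l) ∧
      ¬ EventuallyConst b atTop := by
  obtain ⟨e, he, hne⟩ := he
  exact ⟨splice d e N, fun i hi ↦ splice_of_lt hi, tendsto_pPre_splice_iff.2 he,
    eventuallyConst_splice_iff.not.2 hne⟩

/-- The non-dyadic good channels and the non-dyadic bad channels are each dense in `[0,1]`. -/
theorem good_bad_minus_dyadics_dense :
    ∀ ε ∈ Set.Ioo (0 : ℝ) 1,
      Set.Icc (0 : ℝ) 1 ⊆ closure (Gset ε \ dyadics) ∧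
      Set.Icc (0 : ℝ) 1 ⊆ closure (Bset ε \ dyadics) := by
  intro ε hε
  have hz (d : ℕ → Bool) (N : ℕ) : pPre d N ε ∈ Ioo 0 1 := mapsTo_pPre_Ioo d N hε
  exact ⟨Icc_subset_closure_diff_dyadics fun d N ↦
      exists_agree_tendsto_pPre d N (exists_tendsto_pPre_zero (Ioo_subset_Ico_self (hz d N))),
    Icc_subset_closure_diff_dyadics fun d N ↦
      exists_agree_tendsto_pPre d N (exists_tendsto_pPre_one (Ioo_subset_Ioc_self (hz d N)))⟩
end
end

section
/- Fix k ≥ 2 and let a^k ∈ {0,1}^k be the word with a_1 = ⋯ = a_{k−1} = 1 and a_k = 0. Then p_{a^k}(z) = 2 z^{2^{k−1}} − z^{2^k} for all z ∈ [0,1], and for every starting point z_0 ∈ [0, 2^{−1/(2^{k−1}−1)}), the iterates z_{i+1} = p_{a^k}(z_i) converge to 0. -/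
open Filter Set MeasureTheory

noncomputable section

lemma pPre_ones (k : ℕ) : ∀ n ≤ k - 1, ∀ z : ℝ,
    pPre (fun i => decide (i < k - 1)) n z = z ^ 2 ^ n := by
  intro n hn
  induction n with
  | zero => intro z; simp [pPre]
  | succ m ih =>
    intro z
    have hm : m < k - 1 := hn
    rw [pPre, ih (le_of_lt hm) z]
    simp only [gBit, decide_eq_true_eq, if_pos hm]
    rw [← pow_mul, pow_succ]

lemma pPre_formula (k : ℕ) (hk : 2 ≤ k) (z : ℝ) :
    pPre (fun i => decide (i < k - 1)) k z = 2 * z ^ 2 ^ (k - 1) - z ^ 2 ^ k := by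
  obtain ⟨j, rfl⟩ : ∃ j, k = j + 1 := ⟨k - 1, (Nat.succ_pred_eq_of_pos (by omega)).symm⟩
  have hj : j + 1 - 1 = j := rfl
  rw [pPre, pPre_ones (j+1) j (le_refl _) z]
  simp only [hj, gBit, decide_eq_true_eq]
  rw [if_neg (lt_irrefl j), ← pow_mul, ← pow_succ]

/-- For the word `a^k = (1,…,1,0)` (k−1 ones then a zero), `p_{a^k}(z) = 2z^{2^{k-1}} - z^{2^k}`,
and the iterates of `p_{a^k}` started at any `z₀ ∈ [0, 2^{-1/(2^{k-1}-1)})` converge to `0`. -/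
theorem ones_then_zero_iterates (k : ℕ) (hk : 2 ≤ k) :
    (∀ z ∈ Set.Icc (0 : ℝ) 1,
      pPre (fun i => decide (i < k - 1)) k z = 2 * z ^ 2 ^ (k - 1) - z ^ 2 ^ k) ∧
    (∀ z₀ : ℝ, 0 ≤ z₀ → z₀ < (2 : ℝ) ^ (-(1 : ℝ) / ((2 : ℝ) ^ (k - 1) - 1)) →
      Tendsto (fun m => (fun z => pPre (fun i => decide (i < k - 1)) k z)^[m] z₀)
        atTop (nhds 0)) := by
  constructor
  · intro z _; exact pPre_formula k hk z
  intro z₀ hz₀ hz₀c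
  set N : ℕ := 2 ^ (k - 1) with hN
  have hN2 : 2 ≤ N := by
    have : 1 ≤ k - 1 := by omega
    calc 2 = 2 ^ 1 := rfl
    _ ≤ 2 ^ (k - 1) := Nat.pow_le_pow_right (by norm_num) this
  set c : ℝ := (2 : ℝ) ^ (-(1 : ℝ) / ((2 : ℝ) ^ (k - 1) - 1)) with hc
  -- cast: (2:ℝ)^(k-1) = (N:ℝ)
  have hcast : ((2 : ℝ) ^ (k - 1) : ℝ) = (N : ℝ) := by push_cast [hN]; ring
  have hNR : (1 : ℝ) ≤ (N : ℝ) - 1 := by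
    have : (2 : ℝ) ≤ (N : ℝ) := by exact_mod_cast hN2
    linarith
  have hcpow : c ^ (N - 1) = 1 / 2 := by
    have h1 : ((N - 1 : ℕ) : ℝ) = (N : ℝ) - 1 := by
      push_cast [Nat.cast_sub (by omega : 1 ≤ N)]; ring
    rw [hc, hcast, ← Real.rpow_natCast ((2:ℝ) ^ (-(1:ℝ)/((N:ℝ)-1))) (N-1),
      ← Real.rpow_mul (by norm_num), h1]
    rw [div_mul_cancel₀ (-(1:ℝ)) (by linarith : (N:ℝ) - 1 ≠ 0)]
    rw [Real.rpow_neg_one]; norm_num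
  have hc1 : c ≤ 1 := by
    rw [hc]
    apply Real.rpow_le_one_of_one_le_of_nonpos (by norm_num)
    rw [hcast]
    apply div_nonpos_of_nonpos_of_nonneg <;> linarith
  set q : ℝ := 2 * z₀ ^ (N - 1) with hq
  have hq0 : 0 ≤ q := by positivity
  have hq1 : q < 1 := by
    have : z₀ ^ (N - 1) < c ^ (N - 1) :=
      pow_lt_pow_left₀ hz₀c hz₀ (by omega)
    rw [hcpow] at this
    rw [hq]; linarith
  have hz₀1 : z₀ < 1 := lt_of_lt_of_le hz₀c hc1
  set F : ℝ → ℝ := fun z => pPre (fun i => decide (i < k - 1)) k z with hF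
  have hFeq : ∀ z : ℝ, F z = z ^ N * (2 - z ^ N) := by
    intro z
    simp only [hF]
    rw [pPre_formula k hk z]
    have h2k : 2 ^ k = N * 2 := by
      rw [hN, ← pow_succ]
      congr 1; omega
    rw [h2k, pow_mul]; ring
  -- key induction
  have key : ∀ m, 0 ≤ F^[m] z₀ ∧ F^[m] z₀ ≤ z₀ ∧ F^[m] z₀ ≤ q ^ m * z₀ := by
    intro m
    induction m with
    | zero => simp [hz₀]
    | succ m ih =>
      obtain ⟨h0, hle, hqb⟩ := ih
      set z := F^[m] z₀ with hz
      have hiter : F^[m+1] z₀ = F z := Function.iterate_succ_apply' F m z₀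
      have hzN1 : z ^ N ≤ 1 := pow_le_one₀ h0 (le_of_lt (lt_of_le_of_lt hle hz₀1))
      have hzN0 : (0:ℝ) ≤ z ^ N := by positivity
      have hFz : F z = z ^ N * (2 - z ^ N) := hFeq z
      have h0' : 0 ≤ F z := by rw [hFz]; nlinarith
      have hstep : F z ≤ q * z := by
        rw [hFz]
        have : z ^ N * (2 - z ^ N) ≤ 2 * z ^ N := by nlinarith
        have hpow : z ^ N = z ^ (N - 1) * z := by
          rw [← pow_succ]; congr 1; omega
        have hmono : z ^ (N - 1) ≤ z₀ ^ (N - 1) := pow_le_pow_left₀ h0 hle _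
        calc z ^ N * (2 - z ^ N) ≤ 2 * z ^ N := this
          _ = 2 * z ^ (N - 1) * z := by rw [hpow]; ring
          _ ≤ 2 * z₀ ^ (N - 1) * z := by nlinarith
          _ = q * z := by rw [hq]
      refine ⟨hiter ▸ h0', ?_, ?_⟩
      · rw [hiter]
        calc F z ≤ q * z := hstep
          _ ≤ 1 * z₀ := by nlinarith
          _ = z₀ := one_mul _
      · rw [hiter, pow_succ]
        calc F z ≤ q * z := hstep
          _ ≤ q * (q ^ m * z₀) := by nlinarith
          _ = q ^ m * q * z₀ := by ring
  have hlim : Tendsto (fun m : ℕ => q ^ m * z₀) atTop (nhds 0) := by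
    have := tendsto_pow_atTop_nhds_zero_of_lt_one hq0 hq1
    simpa using this.mul_const z₀
  refine squeeze_zero (fun m => (key m).1) (fun m => (key m).2.2) hlim
end
end

section
/- Fix k ≥ 2 and let a^k ∈ {0,1}^k be the word with a_1 = ⋯ = a_{k−1} = 0 and a_k = 1. Then p_{a^k}(z) = (1 − (1−z)^{2^{k−1}})^2 for all z ∈ [0,1], and for every starting point z_0 ∈ (1 − 2^{−1/(2^{k−1}−1)}, 1], the iterates z_{i+1} = p_{a^k}(z_i) converge to 1. -/
open Filter Set MeasureTheory

noncomputable section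

lemma pPre_zeros (k n : ℕ) (hn : n ≤ k - 1) (z : ℝ) :
    pPre (fun i => decide (i = k - 1)) n z = 1 - (1 - z) ^ 2 ^ n := by
  induction n with
  | zero => simp [pPre]
  | succ n ih =>
    have hn' : n < k - 1 := lt_of_lt_of_le (Nat.lt_succ_self n) hn
    rw [pPre, ih (le_of_lt hn')]
    simp only [gBit, decide_eq_true_eq, hn'.ne, if_false]
    have h2 : (1 - z) ^ 2 ^ (n + 1) = ((1 - z) ^ 2 ^ n) ^ 2 := by
      rw [pow_succ 2 n, pow_mul]
    rw [h2]; ring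

/-- For the word `a^k = (0,…,0,1)` (k−1 zeros then a one),
`p_{a^k}(z) = (1 - (1-z)^{2^{k-1}})²`, and the iterates of `p_{a^k}` started at any
`z₀ ∈ (1 - 2^{-1/(2^{k-1}-1)}, 1]` converge to `1`. -/
theorem zeros_then_one_iterates (k : ℕ) (hk : 2 ≤ k) :
    (∀ z ∈ Set.Icc (0 : ℝ) 1,
      pPre (fun i => decide (i = k - 1)) k z = (1 - (1 - z) ^ 2 ^ (k - 1)) ^ 2) ∧
    (∀ z₀ : ℝ, 1 - (2 : ℝ) ^ (-(1 : ℝ) / ((2 : ℝ) ^ (k - 1) - 1)) < z₀ → z₀ ≤ 1 →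
      Tendsto (fun m => (fun z => pPre (fun i => decide (i = k - 1)) k z)^[m] z₀)
        atTop (nhds 1)) := by
  have key : ∀ z : ℝ, pPre (fun i => decide (i = k - 1)) k z
      = (1 - (1 - z) ^ 2 ^ (k - 1)) ^ 2 := by
    intro z
    obtain ⟨j, rfl⟩ : ∃ j, k = j + 1 := ⟨k - 1, by omega⟩
    simp only [Nat.add_sub_cancel]
    rw [pPre]
    have := pPre_zeros (j + 1) j (by simp) z
    simp only [Nat.add_sub_cancel] at this
    rw [this]
    simp [gBit]
  refine ⟨fun z _ => key z, ?_⟩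
  intro z₀ hz₀l hz₀r
  have hfun : (fun z => pPre (fun i => decide (i = k - 1)) k z)
      = fun z => (1 - (1 - z) ^ 2 ^ (k - 1)) ^ 2 := funext key
  rw [hfun]
  obtain ⟨N, hNeq⟩ : ∃ N, N = 2 ^ (k - 1) := ⟨_, rfl⟩
  have hN2 : 2 ≤ N := by
    rw [hNeq]
    calc 2 = 2 ^ 1 := rfl
    _ ≤ 2 ^ (k - 1) := Nat.pow_le_pow_right (by norm_num) (by omega)
  have hNR : ((2 : ℝ) ^ (k - 1)) = (N : ℝ) := by rw [hNeq]; push_cast; ring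
  rw [← hNeq]
  rw [hNR] at hz₀l
  have hNR2 : (2 : ℝ) ≤ (N : ℝ) := by exact_mod_cast hN2
  clear hNeq hNR hfun key
  set d : ℝ := (N : ℝ) - 1 with hd
  have hd1 : 1 ≤ d := by rw [hd]; linarith
  have hNcast : ((N - 1 : ℕ) : ℝ) = d := by
    rw [hd]; push_cast [Nat.cast_sub (by omega : 1 ≤ N)]; ring
  set t : ℝ := (2 : ℝ) ^ (-(1 : ℝ) / d) with ht
  have ht_lt1 : t < 1 :=
    Real.rpow_lt_one_of_one_lt_of_neg (by norm_num)
      (div_neg_of_neg_of_pos (by norm_num) (by linarith))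
  have ht_pos : 0 < t := Real.rpow_pos_of_pos (by norm_num) _
  have ht_pow : t ^ (N - 1) = 1 / 2 := by
    rw [ht, ← Real.rpow_natCast ((2:ℝ) ^ (-(1:ℝ)/d)) (N - 1),
      ← Real.rpow_mul (by norm_num), hNcast]
    have : (-(1 : ℝ) / d) * d = -1 := by field_simp
    rw [this]
    rw [show (-1 : ℝ) = ((-1 : ℤ) : ℝ) by norm_num, Real.rpow_intCast]
    norm_num
  set u₀ : ℝ := 1 - z₀ with hu0
  have hu0_nonneg : 0 ≤ u₀ := by linarith
  have hu0_lt : u₀ < t := by rw [hu0]; linarith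
  set c : ℝ := 2 * u₀ ^ (N - 1) with hc
  have hc_nonneg : 0 ≤ c := by positivity
  have hc_lt : c < 1 := by
    have : u₀ ^ (N - 1) < t ^ (N - 1) :=
      pow_lt_pow_left₀ hu0_lt hu0_nonneg (by omega)
    rw [ht_pow] at this
    rw [hc]; linarith
  set q : ℝ → ℝ := fun z => (1 - (1 - z) ^ N) ^ 2 with hq
  have main : ∀ m, 0 ≤ 1 - q^[m] z₀ ∧ 1 - q^[m] z₀ ≤ c ^ m * u₀ := by
    intro m
    induction m with
    | zero =>
      simp only [Function.iterate_zero_apply, pow_zero, one_mul, ← hu0]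
      exact ⟨hu0_nonneg, le_refl u₀⟩
    | succ m ih =>
      obtain ⟨h0, h1⟩ := ih
      have hcm1 : c ^ m ≤ 1 := pow_le_one₀ hc_nonneg hc_lt.le
      set u : ℝ := 1 - q^[m] z₀ with hu
      have hu_le : u ≤ u₀ := h1.trans (by nlinarith)
      have hu_le1 : u ≤ 1 := by linarith
      have hqs : q^[m + 1] z₀ = q (q^[m] z₀) := Function.iterate_succ_apply' q m z₀
      have hx : 1 - q^[m] z₀ = u := rfl
      have hqx : q (q^[m] z₀) = (1 - u ^ N) ^ 2 := by rw [hu]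
      have huN0 : 0 ≤ u ^ N := pow_nonneg h0 N
      have huN1 : u ^ N ≤ 1 := pow_le_one₀ h0 hu_le1
      constructor
      · rw [hqs, hqx]; nlinarith
      · rw [hqs, hqx]
        have hsplit : u ^ N = u ^ (N - 1) * u := by
          rw [← pow_succ]; congr 1; omega
        have hple : u ^ (N - 1) ≤ u₀ ^ (N - 1) := pow_le_pow_left₀ h0 hu_le _
        have h2 : 1 - (1 - u ^ N) ^ 2 ≤ 2 * u ^ N := by nlinarith
        have h3 : 2 * u ^ N ≤ c * u := by
          rw [hsplit, hc]; nlinarith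
        calc 1 - (1 - u ^ N) ^ 2 ≤ c * u := h2.trans h3
        _ ≤ c * (c ^ m * u₀) := mul_le_mul_of_nonneg_left h1 hc_nonneg
        _ = c ^ (m + 1) * u₀ := by ring
  have hmaj : Tendsto (fun m => c ^ m * u₀) atTop (nhds 0) := by
    simpa using (tendsto_pow_atTop_nhds_zero_of_lt_one hc_nonneg hc_lt).mul_const u₀
  have hu_tendsto : Tendsto (fun m => 1 - q^[m] z₀) atTop (nhds 0) :=
    tendsto_of_tendsto_of_tendsto_of_le_of_le tendsto_const_nhds hmaj
      (fun m => (main m).1) (fun m => (main m).2)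
  have := tendsto_const_nhds (x := (1 : ℝ)) (f := atTop (α := ℕ)) |>.sub hu_tendsto
  simpa using this
end
end

section
/- The Hausdorff dimension of the set of ρ-heavy channels satisfies dim_H(H(ρ)) = 1 for every ρ ∈ [0,1/2], and dim_H(H(ρ)) ≥ h₂(ρ) for every ρ ∈ (1/2,1], where h₂(x) = −x·log₂x − (1−x)·log₂(1−x) is the binary entropy function. -/
open Filter Set MeasureTheory

noncomputable section

/-!
The Bernoulli(`p`) product measure on `ℕ → Bool` is carried, by the strong law of large numbers,
by sequences with `w(bⁿ) / n → p`. For `p > ρ` these are `ρ`-heavy, and their prefix cylinders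
have mass `p ^ w (1 - p) ^ (n - w) = 2 ^ (-n (h₂(p) + o(1)))`. A set of diameter at most `2⁻ⁿ`
pulls back under `f` into at most five cylinders of level `n`, so the mass distribution principle
gives `dim_H H(ρ) ≥ h₂(p)` for every `p ∈ (ρ, 1)`. Letting `p ↓ ρ`, or `p ↓ 1/2` when `ρ ≤ 1/2`,
and using the continuity of `h₂` gives the claim.
-/

open Metric ProbabilityTheory Real unitInterval
open scoped ENNReal NNReal Topology

lemma ENNReal.exists_inv_two_pow_near {D : ℝ≥0∞} {N : ℕ} (hD0 : D ≠ 0) (hD : D ≤ 2⁻¹ ^ N) :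
    ∃ m, N ≤ m ∧ D ≤ 2⁻¹ ^ m ∧ 2⁻¹ ^ m ≤ 2 * D := by
  classical
  have hex := ENNReal.exists_inv_two_pow_lt hD0
  have hk : 2⁻¹ ^ Nat.find hex < D := Nat.find_spec hex
  have hNk : N < Nat.find hex := by
    by_contra! hkN
    exact (hk.trans_le hD).not_ge (pow_le_pow_right_of_le_one' (by norm_num) hkN)
  obtain ⟨m, hm⟩ : ∃ m, Nat.find hex = m + 1 := Nat.exists_eq_add_one_of_ne_zero (by omega)
  refine ⟨m, by omega, not_lt.1 (Nat.find_min hex (by omega)), ?_⟩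
  calc (2⁻¹ : ℝ≥0∞) ^ m = 2 * 2⁻¹ ^ (m + 1) := by
        rw [pow_succ, mul_comm, mul_assoc, ENNReal.inv_mul_cancel two_ne_zero ENNReal.ofNat_ne_top,
          mul_one]
    _ ≤ 2 * D := by rw [← hm]; exact mul_le_mul_right hk.le 2

section MassDistribution

variable {Y X : Type*} [MeasurableSpace Y] [EMetricSpace X] [MeasurableSpace X] [BorelSpace X]

theorem le_dimH_image_of_measure_preimage_le (μ : Measure Y) (f : Y → X) {G : Set Y}
    {d : ℝ≥0} {C δ : ℝ≥0∞} (hC : C ≠ ∞) (hδ : 0 < δ) (hG : μ G ≠ 0)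
    (h : ∀ t : Set X, ediam t ≤ δ → μ (G ∩ f ⁻¹' t) ≤ C * ediam t ^ (d : ℝ)) :
    (d : ℝ≥0∞) ≤ dimH (f '' G) := by
  refine le_dimH_of_hausdorffMeasure_ne_zero fun h0 => hG ?_
  have hcover : μ G / C ≤ μH[d] (f '' G) := by
    rw [Measure.hausdorffMeasure_apply]
    refine le_iSup₂_of_le δ hδ <| le_iInf₂ fun t hft => le_iInf fun htδ => ?_
    refine ENNReal.div_le_of_le_mul' ?_
    calc μ G ≤ μ (⋃ n, G ∩ f ⁻¹' t n) := by
          refine measure_mono fun y hy => ?_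
          obtain ⟨n, hn⟩ := mem_iUnion.1 (hft (mem_image_of_mem f hy))
          exact mem_iUnion.2 ⟨n, hy, hn⟩
      _ ≤ ∑' n, μ (G ∩ f ⁻¹' t n) := measure_iUnion_le _
      _ ≤ ∑' n, C * ⨆ _ : (t n).Nonempty, ediam (t n) ^ (d : ℝ) := by
          refine ENNReal.tsum_le_tsum fun n => ?_
          rcases (t n).eq_empty_or_nonempty with hn | hn
          · simp [hn]
          · rw [ciSup_pos hn]
            exact h _ (htδ n)
      _ = C * ∑' n, ⨆ _ : (t n).Nonempty, ediam (t n) ^ (d : ℝ) := ENNReal.tsum_mul_left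
  rw [h0, nonpos_iff_eq_zero, ENNReal.div_eq_zero_iff] at hcover
  exact hcover.resolve_right hC

theorem le_dimH_image_of_measure_preimage_le_inv_two_pow (μ : Measure Y) (f : Y → X)
    {G : Set Y} {d : ℝ≥0} {A : ℝ≥0∞} (hA : A ≠ ∞) (hd : 0 < d) (hG : μ G ≠ 0) (N : ℕ)
    (h : ∀ m, N ≤ m → ∀ t : Set X, ediam t ≤ 2⁻¹ ^ m →
      μ (G ∩ f ⁻¹' t) ≤ A * (2⁻¹ ^ m) ^ (d : ℝ)) :
    (d : ℝ≥0∞) ≤ dimH (f '' G) := by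
  have hd' : (0 : ℝ) < d := hd
  refine le_dimH_image_of_measure_preimage_le μ f (C := A * 2 ^ (d : ℝ))
    (ENNReal.mul_ne_top hA (by simp)) (ENNReal.pow_pos (by norm_num : (0 : ℝ≥0∞) < 2⁻¹) N) hG
    fun t ht => ?_
  rcases eq_or_ne (ediam t) 0 with h0 | h0
  · have hlim : Tendsto (fun m => A * ((2⁻¹ : ℝ≥0∞) ^ (m + N)) ^ (d : ℝ)) atTop (𝓝 0) := by
      have := ((ENNReal.continuous_rpow_const (y := d)).tendsto 0).comp
        ((ENNReal.tendsto_pow_atTop_nhds_zero_of_lt_one (by norm_num : (2⁻¹ : ℝ≥0∞) < 1)).comp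
          (tendsto_add_atTop_iff_nat N |>.2 tendsto_id))
      simpa [ENNReal.zero_rpow_of_pos hd'] using ENNReal.Tendsto.const_mul this (Or.inr hA)
    exact (ge_of_tendsto' hlim fun m => h (m + N) (by omega) t (by simp [h0])).trans zero_le
  · obtain ⟨m, hNm, htm, hm⟩ := ENNReal.exists_inv_two_pow_near h0 ht
    calc μ (G ∩ f ⁻¹' t) ≤ A * (2⁻¹ ^ m) ^ (d : ℝ) := h m hNm t htm
      _ ≤ A * (2 * ediam t) ^ (d : ℝ) := by gcongr
      _ = A * 2 ^ (d : ℝ) * ediam t ^ (d : ℝ) := by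
        rw [ENNReal.mul_rpow_of_nonneg _ _ hd'.le, mul_assoc]

end MassDistribution

def prefixCylinder (b : ℕ → Bool) (n : ℕ) : Set (ℕ → Bool) :=
  (Finset.range n : Set ℕ).pi fun i => {b i}

def prefixNat (b : ℕ → Bool) : ℕ → ℕ
  | 0 => 0
  | n + 1 => 2 * prefixNat b n + (b n).toNat

lemma mem_prefixCylinder_of_prefixNat_eq {b c : ℕ → Bool} {n : ℕ}
    (h : prefixNat c n = prefixNat b n) : c ∈ prefixCylinder b n := by
  induction n with
  | zero => simp [prefixCylinder]
  | succ n ih =>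
    simp only [prefixNat] at h
    have hn : c n = b n := by cases hc : c n <;> cases hb : b n <;> simp_all <;> omega
    rw [hn] at h
    intro i hi
    rcases Nat.lt_succ_iff_lt_or_eq.1 (Finset.mem_range.1 hi) with hi | rfl
    · exact ih (by omega) i (Finset.mem_range.2 hi)
    · exact hn

lemma summable_fBin (b : ℕ → Bool) :
    Summable fun n => (if b n then (1 : ℝ) else 0) / 2 ^ (n + 1) := by
  refine (summable_geometric_two' 1).of_nonneg_of_le (fun n => by positivity) fun n => ?_
  rw [div_div, ← pow_succ']
  gcongr
  split <;> norm_num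

lemma sum_range_fBin (b : ℕ → Bool) (n : ℕ) :
    ∑ i ∈ Finset.range n, (if b i then (1 : ℝ) else 0) / 2 ^ (i + 1) = prefixNat b n / 2 ^ n := by
  induction n with
  | zero => simp [prefixNat]
  | succ n ih =>
    rw [Finset.sum_range_succ, ih, prefixNat]
    cases b n <;> simp <;> field_simp <;> ring

lemma fBin_mem_Icc (b : ℕ → Bool) (n : ℕ) :
    fBin b ∈ Icc ((prefixNat b n : ℝ) / 2 ^ n) ((prefixNat b n + 1 : ℝ) / 2 ^ n) := by
  have hsplit := ((summable_fBin b).sum_add_tsum_nat_add n).symm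
  rw [sum_range_fBin] at hsplit
  have htail : ∑' i, (if b (i + n) then (1 : ℝ) else 0) / 2 ^ (i + n + 1) ≤ 1 / 2 ^ n := by
    calc ∑' i, (if b (i + n) then (1 : ℝ) else 0) / 2 ^ (i + n + 1)
        ≤ ∑' i : ℕ, 1 / 2 ^ n / 2 / 2 ^ i := by
          refine ((summable_nat_add_iff n).2 (summable_fBin b)).tsum_le_tsum (fun i => ?_)
            (summable_geometric_two' _)
          rw [div_div, div_div, show (2 : ℝ) ^ n * (2 * 2 ^ i) = 2 ^ (i + n + 1) by ring]
          gcongr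
          split <;> norm_num
      _ = 1 / 2 ^ n := tsum_geometric_two' _
  rw [fBin, hsplit, add_div]
  exact ⟨le_add_of_nonneg_right (tsum_nonneg fun i => by positivity), by gcongr⟩

lemma prefixNat_le_add_two {b c : ℕ → Bool} {n : ℕ} (h : fBin c ≤ fBin b + 1 / 2 ^ n) :
    prefixNat c n ≤ prefixNat b n + 2 := by
  have hc := (fBin_mem_Icc c n).1
  have hb := (fBin_mem_Icc b n).2
  have h2 : (0 : ℝ) < 2 ^ n := by positivity
  have : (prefixNat c n : ℝ) ≤ prefixNat b n + 2 := by
    have := hc.trans (h.trans (add_le_add_left hb _))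
    rw [← add_div, div_le_div_iff_of_pos_right h2] at this
    linarith
  exact_mod_cast this

lemma measure_inter_preimage_fBin_le (μ : Measure (ℕ → Bool)) {G : Set (ℕ → Bool)} {n : ℕ}
    {B : ℝ≥0∞} (hG : ∀ b ∈ G, μ (prefixCylinder b n) ≤ B) {t : Set ℝ}
    (ht : ediam t ≤ 2⁻¹ ^ n) : μ (G ∩ fBin ⁻¹' t) ≤ 5 * B := by
  rcases (G ∩ fBin ⁻¹' t).eq_empty_or_nonempty with he | ⟨b, -, hbt⟩
  · simp [he]
  have hclose : ∀ c ∈ fBin ⁻¹' t, fBin c ≤ fBin b + 1 / 2 ^ n ∧ fBin b ≤ fBin c + 1 / 2 ^ n := by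
    intro c hct
    have hdist : dist (fBin c) (fBin b) ≤ 1 / 2 ^ n := by
      rw [← edist_le_ofReal (by positivity), one_div, ENNReal.ofReal_inv_of_pos (by positivity),
        ENNReal.ofReal_pow zero_le_two, ENNReal.ofReal_ofNat, ENNReal.inv_pow]
      exact (edist_le_ediam_of_mem (s := t) hct hbt).trans ht
    rw [Real.dist_eq, abs_le] at hdist
    constructor <;> linarith
  set K := prefixNat b n
  have hcover : G ∩ fBin ⁻¹' t ⊆
      ⋃ k ∈ Finset.Icc (K - 2) (K + 2), G ∩ {c | prefixNat c n = k} := by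
    intro c ⟨hcG, hct⟩
    have h1 := prefixNat_le_add_two (hclose c hct).1
    have h2 := prefixNat_le_add_two (hclose c hct).2
    exact mem_biUnion (Finset.mem_Icc.2 ⟨by omega, h1⟩) ⟨hcG, rfl⟩
  have hpiece : ∀ k, μ (G ∩ {c | prefixNat c n = k}) ≤ B := by
    intro k
    rcases (G ∩ {c | prefixNat c n = k}).eq_empty_or_nonempty with he | ⟨a, haG, rfl⟩
    · simp [he]
    exact (measure_mono fun c hc => mem_prefixCylinder_of_prefixNat_eq hc.2).trans (hG a haG)
  calc μ (G ∩ fBin ⁻¹' t) ≤ ∑ k ∈ Finset.Icc (K - 2) (K + 2), μ (G ∩ {c | prefixNat c n = k}) :=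
        (measure_mono hcover).trans (measure_biUnion_finset_le _ _)
    _ ≤ ∑ _k ∈ Finset.Icc (K - 2) (K + 2), B := Finset.sum_le_sum fun k _ => hpiece k
    _ ≤ 5 * B := by
        rw [Finset.sum_const, nsmul_eq_mul, Nat.card_Icc]
        gcongr
        exact_mod_cast (by omega : K + 2 + 1 - (K - 2) ≤ 5)

def bernoulliSeq (p : I) : Measure (ℕ → Bool) := Measure.infinitePi fun _ => Ber(true, false, p)

instance (p : I) : IsProbabilityMeasure (bernoulliSeq p) := by
  unfold bernoulliSeq; infer_instance

lemma wPre_eq_card (b : ℕ → Bool) (n : ℕ) : wPre b n = ((Finset.range n).filter (b ·)).card := by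
  simp [wPre, Finset.sum_boole]

lemma wPre_le (b : ℕ → Bool) (n : ℕ) : wPre b n ≤ n := by
  rw [wPre_eq_card]
  exact (Finset.card_filter_le _ _).trans (Finset.card_range n).le

lemma bernoulliSeq_prefixCylinder (p : I) (b : ℕ → Bool) (n : ℕ) :
    bernoulliSeq p (prefixCylinder b n) =
      ENNReal.ofReal ((p : ℝ) ^ wPre b n * (1 - p) ^ (n - wPre b n)) := by
  have hsingle : ∀ c : Bool, Ber(true, false, p) {c} = ENNReal.ofReal (if c then p else 1 - p) := by
    intro c
    cases c <;> simp [ENNReal.ofReal, Real.toNNReal, p.2.1, p.2.2] <;> rfl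
  rw [bernoulliSeq, prefixCylinder, Measure.infinitePi_pi _ (by simp)]
  simp_rw [hsingle]
  rw [← ENNReal.ofReal_prod_of_nonneg fun i _ => by split <;> simp [p.2.1, p.2.2], Finset.prod_ite,
    Finset.prod_const, Finset.prod_const, wPre_eq_card]
  congr 3
  have := Finset.card_filter_add_card_filter_not (s := Finset.range n) (b ·)
  simp only [Finset.card_range] at this
  omega

lemma ae_tendsto_wPre_div (p : I) :
    ∀ᵐ b ∂bernoulliSeq p, Tendsto (fun n => (wPre b n : ℝ) / n) atTop (𝓝 p) := by
  set g : Bool → ℝ := fun c => if c then 1 else 0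
  have hg : Measurable g := .of_discrete
  have heval : ∀ i,
      MeasurePreserving (fun b : ℕ → Bool => b i) (bernoulliSeq p) Ber(true, false, p) :=
    measurePreserving_eval_infinitePi _
  have hlaw : ∀ i, (bernoulliSeq p).map (fun b => g (b i)) = Ber(true, false, p).map g := by
    intro i
    rw [← (heval i).map_eq, Measure.map_map hg (heval i).measurable]
    rfl
  have hmean : ∫ b, g (b 0) ∂bernoulliSeq p = p := by
    rw [← integral_map (heval 0).measurable.aemeasurable hg.aestronglyMeasurable, (heval 0).map_eq,
      integral_bernoulliMeasure]
    simp [g]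
  have hslln := strong_law_ae (μ := bernoulliSeq p) (fun i b => g (b i))
    ((heval 0).integrable_comp_of_integrable (integrable_bernoulliMeasure _ _ _ g))
    (fun i j hij => (iIndepFun_infinitePi (P := fun _ => Ber(true, false, p))
      (X := fun _ => g) fun _ => hg).indepFun hij)
    (fun i => ⟨(hg.comp (heval i).measurable).aemeasurable,
      (hg.comp (heval 0).measurable).aemeasurable, (hlaw i).trans (hlaw 0).symm⟩)
  filter_upwards [hslln] with b hb
  rw [hmean] at hb
  refine hb.congr fun n => ?_
  simp [wPre, g, div_eq_inv_mul]

lemma heavy_of_tendsto {ρ p : ℝ} {b : ℕ → Bool} (hρp : ρ < p)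
    (h : Tendsto (fun n => (wPre b n : ℝ) / n) atTop (𝓝 p)) : Heavy ρ b := by
  refine le_liminf_of_le (by isBoundedDefault) ?_
  filter_upwards [h.eventually (lt_mem_nhds hρp), eventually_gt_atTop 0] with n hn hn0
  rw [lt_div_iff₀ (by exact_mod_cast hn0)] at hn
  exact EReal.coe_nonneg.2 (by linarith)

lemma eventually_pow_mul_one_sub_pow_le {p d : ℝ} (hp0 : 0 < p) (hp1 : p < 1)
    (hd : d * log 2 < binEntropy p) {w : ℕ → ℕ} (hw : ∀ n, w n ≤ n)
    (hlim : Tendsto (fun n => (w n : ℝ) / n) atTop (𝓝 p)) :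
    ∀ᶠ n in atTop, p ^ w n * (1 - p) ^ (n - w n) ≤ ((2 : ℝ) ^ n)⁻¹ ^ d := by
  have hrate : Tendsto (fun n => (w n : ℝ) / n * log p + (1 - (w n : ℝ) / n) * log (1 - p))
      atTop (𝓝 (-binEntropy p)) := by
    convert (hlim.mul_const (log p)).add ((tendsto_const_nhds.sub hlim).mul_const (log (1 - p)))
      using 2
    simp only [binEntropy, log_inv]
    ring
  filter_upwards [hrate.eventually (gt_mem_nhds (neg_lt_neg hd)), eventually_gt_atTop 0]
    with n hn hn0
  have hn0' : (0 : ℝ) < n := by exact_mod_cast hn0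
  have h1p : 0 < 1 - p := by linarith
  have hpos : 0 < p ^ w n * (1 - p) ^ (n - w n) := by positivity
  have hlog : log (p ^ w n * (1 - p) ^ (n - w n)) =
      n * ((w n : ℝ) / n * log p + (1 - (w n : ℝ) / n) * log (1 - p)) := by
    rw [log_mul (by positivity) (by positivity), log_pow, log_pow, Nat.cast_sub (hw n)]
    field_simp
  rw [← exp_log hpos, hlog, rpow_def_of_pos (by positivity), log_inv, log_pow]
  exact exp_le_exp.2 (by nlinarith)

theorem coe_le_dimH_Hset {ρ p : ℝ} {d : ℝ≥0} (hρp : ρ < p) (hp0 : 0 < p) (hp1 : p < 1)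
    (hd0 : 0 < d) (hd : d * log 2 < binEntropy p) : (d : ℝ≥0∞) ≤ dimH (Hset ρ) := by
  set q : I := ⟨p, Set.mem_Icc.2 ⟨hp0.le, hp1.le⟩⟩
  set μ := bernoulliSeq q
  set G : ℕ → Set (ℕ → Bool) := fun N => {b | Tendsto (fun n => (wPre b n : ℝ) / n) atTop (𝓝 p) ∧
    ∀ n, N ≤ n → μ (prefixCylinder b n) ≤ (2⁻¹ ^ n) ^ (d : ℝ)}
  have hcover : ∀ᵐ b ∂μ, b ∈ ⋃ N, G N := by
    filter_upwards [ae_tendsto_wPre_div q] with b hb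
    obtain ⟨N, hN⟩ := eventually_atTop.1
      (eventually_pow_mul_one_sub_pow_le hp0 hp1 hd (wPre_le b) hb)
    refine mem_iUnion.2 ⟨N, hb, fun n hn => ?_⟩
    rw [bernoulliSeq_prefixCylinder, ← ENNReal.inv_pow, ← ENNReal.ofReal_ofNat 2,
      ← ENNReal.ofReal_pow zero_le_two, ← ENNReal.ofReal_inv_of_pos (by positivity),
      ENNReal.ofReal_rpow_of_nonneg (by positivity) d.coe_nonneg]
    exact ENNReal.ofReal_le_ofReal (hN n hn)
  obtain ⟨N, hN⟩ : ∃ N, 0 < μ (G N) := by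
    refine exists_measure_pos_of_not_measure_iUnion_null ?_
    rw [measure_congr (ae_eq_univ.2 (mem_ae_iff.1 hcover : μ (⋃ N, G N)ᶜ = 0)), measure_univ]
    exact one_ne_zero
  have hdim := le_dimH_image_of_measure_preimage_le_inv_two_pow μ fBin (A := 5) (by simp) hd0
    hN.ne' N fun m hm t ht => measure_inter_preimage_fBin_le μ (fun b hb => hb.2 m hm) ht
  exact hdim.trans (dimH_mono (image_subset_iff.2 fun b hb => ⟨b, rfl, heavy_of_tendsto hρp hb.1⟩))

theorem ofReal_binEntropy_div_log_two_le_dimH_Hset {ρ p : ℝ} (hρp : ρ ≤ p) (hp0 : 0 ≤ p)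
    (hp1 : p < 1) : ENNReal.ofReal (binEntropy p / log 2) ≤ dimH (Hset ρ) := by
  refine ENNReal.le_of_forall_nnreal_lt fun d hd => ?_
  rcases eq_zero_or_pos d with rfl | hd0
  · exact zero_le
  have hdp : d * log 2 < binEntropy p := by
    rw [ENNReal.coe_lt_ofReal, lt_div_iff₀ (log_pos one_lt_two)] at hd
    exact hd
  obtain ⟨q, ⟨hdq, hq1⟩, hpq⟩ :=
    ((binEntropy_continuous.tendsto p).eventually (lt_mem_nhds hdp) |>.and
      (eventually_lt_nhds hp1) |>.filter_mono nhdsWithin_le_nhds |>.and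
      (self_mem_nhdsWithin : Ioi p ∈ 𝓝[>] p)).exists
  exact coe_le_dimH_Hset (hρp.trans_lt hpq) (hp0.trans_lt hpq) hq1 hd0 hdq

/-- `dim_H H(ρ) = 1` for `ρ ∈ [0,1/2]` and `dim_H H(ρ) ≥ h₂(ρ)` for `ρ ∈ (1/2,1]`. -/
theorem heavy_dimH :
    (∀ ρ : ℝ, 0 ≤ ρ → ρ ≤ 1 / 2 → dimH (Hset ρ) = 1) ∧
    (∀ ρ : ℝ, 1 / 2 < ρ → ρ ≤ 1 →
      ENNReal.ofReal (-ρ * Real.logb 2 ρ - (1 - ρ) * Real.logb 2 (1 - ρ)) ≤ dimH (Hset ρ)) := by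
  refine ⟨fun ρ _ hρ => le_antisymm ?_ ?_, fun ρ hρ hρ1 => ?_⟩
  · exact (dimH_mono (subset_univ _)).trans_eq Real.dimH_univ
  · simpa [(log_pos one_lt_two).ne'] using
      ofReal_binEntropy_div_log_two_le_dimH_Hset (p := 2⁻¹) (by linarith) (by norm_num)
        (by norm_num)
  rcases hρ1.lt_or_eq with hρ1 | rfl
  · convert ofReal_binEntropy_div_log_two_le_dimH_Hset le_rfl (by linarith) hρ1 using 2
    simp only [binEntropy, logb, log_inv]
    ring
  · simp
end
end
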